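/- The 5-dimensional algebra L(1,1,2) (basis e₀,...,e₄ with [e₀,e₀]=e₂, [e₂,e₀]=e₃, [e₃,e₀]=e₄, [e₀,e₁]=e₃+e₄, [e₁,e₁]=2e₄, [e₂,e₁]=e₄) is a nilpotent Leibniz algebra with nilindex 5: L¹⊋L²⊋L³⊋L⁴⊋L⁵={0}, where L¹=L and L^{k+1}=[L^k,L]. -/

import Mathlib

/-!
The bracket raises the coordinate filtration `V_k = {v | v₀ = ⋯ = v_{k-1} = 0}`: every bracket
lies in `V₂`, and `[V_k, L] ⊆ V_{k+1}` for `k ≥ 2`. Hence `L^{k+1} ⊆ V_{k+1}`, and `L⁵ ⊆ V₅ = 0`.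
Right multiplication by `e₀` sends `e₀ ↦ e₂ ↦ e₃ ↦ e₄`, so `e₀, e₂, e₃, e₄` lie in `L¹, L², L³, L⁴`
respectively but not in `V₂, V₃, V₄, V₅`, which makes every inclusion strict.
-/

/-- The bracket of the algebra `L(1,1,2)` in `SLeib₅`. -/
def brL112 (x y : Fin 5 → ℂ) : Fin 5 → ℂ :=
  ![0, 0,
    x 0 * y 0,
    x 2 * y 0 + x 0 * y 1,
    x 3 * y 0 + x 0 * y 1 + 2 * (x 1 * y 1) + x 2 * y 1]

/-- The lower central series: `lcsL112 0 = L¹ = L`, `lcsL112 k = L^{k+1}`. -/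
noncomputable def lcsL112 : ℕ → Submodule ℂ (Fin 5 → ℂ)
  | 0 => ⊤
  | n + 1 => Submodule.span ℂ {z | ∃ x ∈ lcsL112 n, ∃ y : Fin 5 → ℂ, z = brL112 x y}

section VanishBelow

variable (R : Type*) [Semiring R] (n : ℕ)

def vanishBelow (k : ℕ) : Submodule R (Fin n → R) :=
  Submodule.pi {i | (i : ℕ) < k} fun _ => ⊥

variable {R n}

theorem mem_vanishBelow {k : ℕ} {v : Fin n → R} :
    v ∈ vanishBelow R n k ↔ ∀ i : Fin n, (i : ℕ) < k → v i = 0 := by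
  simp [vanishBelow, Submodule.mem_pi]

theorem vanishBelow_self : vanishBelow R n n = ⊥ :=
  eq_bot_iff.2 fun _ hv => (Submodule.mem_bot R).2 <| funext fun i => mem_vanishBelow.1 hv i i.2

theorem single_one_notMem_vanishBelow [Nontrivial R] {k : ℕ} {i : Fin n} (hi : (i : ℕ) < k) :
    Pi.single i 1 ∉ vanishBelow R n k := fun h => by
  simpa using mem_vanishBelow.1 h i hi

end VanishBelow

theorem lcsL112_succ (n : ℕ) :
    lcsL112 (n + 1) = Submodule.span ℂ {z | ∃ x ∈ lcsL112 n, ∃ y, z = brL112 x y} := rfl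

theorem brL112_mem_lcsL112_succ {n : ℕ} {x : Fin 5 → ℂ} (hx : x ∈ lcsL112 n) (y : Fin 5 → ℂ) :
    brL112 x y ∈ lcsL112 (n + 1) :=
  Submodule.subset_span ⟨x, hx, y, rfl⟩

theorem lcsL112_succ_le_iff {n : ℕ} {W : Submodule ℂ (Fin 5 → ℂ)} :
    lcsL112 (n + 1) ≤ W ↔ ∀ x ∈ lcsL112 n, ∀ y, brL112 x y ∈ W := by
  rw [lcsL112_succ, Submodule.span_le]
  constructor
  · exact fun h x hx y => h ⟨x, hx, y, rfl⟩
  · rintro h _ ⟨x, hx, y, rfl⟩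
    exact h x hx y

theorem lcsL112_succ_le (n : ℕ) : lcsL112 (n + 1) ≤ lcsL112 n := by
  induction n with
  | zero => exact le_top
  | succ n ih => exact lcsL112_succ_le_iff.2 fun x hx y => brL112_mem_lcsL112_succ (ih hx) y

theorem brL112_mem_vanishBelow_two (x y : Fin 5 → ℂ) : brL112 x y ∈ vanishBelow ℂ 5 2 := by
  rw [mem_vanishBelow]
  intro i hi
  fin_cases i <;> simp_all [brL112]

theorem brL112_mem_vanishBelow_succ {k : ℕ} (hk : 2 ≤ k) {x : Fin 5 → ℂ}
    (hx : x ∈ vanishBelow ℂ 5 k) (y : Fin 5 → ℂ) : brL112 x y ∈ vanishBelow ℂ 5 (k + 1) := by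
  rw [mem_vanishBelow] at hx ⊢
  intro i hi
  fin_cases i <;> simp at hi <;> simp (disch := omega) [brL112, hx]

theorem lcsL112_le_vanishBelow (n : ℕ) : lcsL112 (n + 1) ≤ vanishBelow ℂ 5 (n + 2) := by
  induction n with
  | zero => exact lcsL112_succ_le_iff.2 fun x _ y => brL112_mem_vanishBelow_two x y
  | succ n ih =>
    exact lcsL112_succ_le_iff.2 fun x hx y => brL112_mem_vanishBelow_succ (by omega) (ih hx) y

theorem single_mem_lcsL112 :
    (Pi.single 2 1 : Fin 5 → ℂ) ∈ lcsL112 1 ∧ (Pi.single 3 1 : Fin 5 → ℂ) ∈ lcsL112 2 ∧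
      (Pi.single 4 1 : Fin 5 → ℂ) ∈ lcsL112 3 := by
  have step {n : ℕ} {i j : Fin 5} (hi : Pi.single i 1 ∈ lcsL112 n)
      (hij : brL112 (Pi.single i 1) (Pi.single 0 1) = Pi.single j 1) :
      Pi.single j 1 ∈ lcsL112 (n + 1) :=
    hij ▸ brL112_mem_lcsL112_succ hi _
  have h₂ := step (n := 0) (i := 0) (j := 2) Submodule.mem_top
    (by ext k; fin_cases k <;> simp [brL112])
  have h₃ := step (j := 3) h₂ (by ext k; fin_cases k <;> simp [brL112])
  exact ⟨h₂, h₃, step (j := 4) h₃ (by ext k; fin_cases k <;> simp [brL112])⟩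

theorem lcsL112_succ_lt {n : ℕ} {i : Fin 5} (hi : (i : ℕ) < n + 2)
    (h : Pi.single i 1 ∈ lcsL112 n) : lcsL112 (n + 1) < lcsL112 n :=
  SetLike.lt_iff_le_and_exists.2 ⟨lcsL112_succ_le n, _, h,
    fun h' => single_one_notMem_vanishBelow hi (lcsL112_le_vanishBelow n h')⟩

/-- `L(1,1,2)` is nilpotent of nilindex 5:
`L¹ ⊋ L² ⊋ L³ ⊋ L⁴ ⊋ L⁵ = 0`. -/
theorem L112_nilpotent_nilindex_five :
    lcsL112 1 < lcsL112 0 ∧ lcsL112 2 < lcsL112 1 ∧ lcsL112 3 < lcsL112 2 ∧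
      lcsL112 4 < lcsL112 3 ∧ lcsL112 4 = ⊥ := by
  obtain ⟨h₂, h₃, h₄⟩ := single_mem_lcsL112
  refine ⟨lcsL112_succ_lt (i := 0) (by simp) Submodule.mem_top, lcsL112_succ_lt (by simp) h₂,
    lcsL112_succ_lt (by simp) h₃, lcsL112_succ_lt (by simp) h₄, ?_⟩
  exact eq_bot_iff.2 (vanishBelow_self (R := ℂ) (n := 5) ▸ lcsL112_le_vanishBelow 3)
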